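/- arXiv:2510.22307 — 2 statements merged into one kernel-verified Lean document; each statement's English description precedes it below -/
import Mathlib

section
/- Let f, g : {0,1}^n → ℝ. Then ∑_{S ⊆ [n], |S| ≥ 2} f̂(S)·ĝ(S) = (1/8)·∑_{1 ≤ i < j ≤ n} ∫_0^∞ (e^{t} − 1)·E[D_{ij} f · P_t(D_{ij} g)] dt, where D_i f(x) = f(x) − f(x⊕e_i) and D_{ij} = D_i ∘ D_j. -/
open Finset MeasureTheory

/-- Expectation with respect to the uniform measure on `{0,1}^n`. -/
noncomputable def Ev (n : ℕ) (f : (Fin n → Bool) → ℝ) : ℝ :=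
  (∑ x : Fin n → Bool, f x) / 2 ^ n

/-- `f` is increasing (monotone w.r.t. the coordinatewise order). -/
def Increasing' (n : ℕ) (f : (Fin n → Bool) → ℝ) : Prop :=
  ∀ x y : Fin n → Bool, (∀ i, x i ≤ y i) → f x ≤ f y

/-- `f` is submodular: `f(x∧y) + f(x∨y) ≤ f(x) + f(y)`. -/
def Submodular' (n : ℕ) (f : (Fin n → Bool) → ℝ) : Prop :=
  ∀ x y : Fin n → Bool,
    f (fun i => x i && y i) + f (fun i => x i || y i) ≤ f x + f y

/-- `f` is supermodular: `f(x) + f(y) ≤ f(x∧y) + f(x∨y)`. -/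
def Supermodular' (n : ℕ) (f : (Fin n → Bool) → ℝ) : Prop :=
  ∀ x y : Fin n → Bool,
    f x + f y ≤ f (fun i => x i && y i) + f (fun i => x i || y i)

/-- Discrete derivative `∂_i f (x) = f(x^{(i→1)}) - f(x^{(i→0)})`. -/
noncomputable def pD (n : ℕ) (i : Fin n) (f : (Fin n → Bool) → ℝ) :
    (Fin n → Bool) → ℝ :=
  fun x => f (Function.update x i true) - f (Function.update x i false)

/-- Character `χ_S(x) = (-1)^{∑_{i ∈ S} x_i}`. -/
noncomputable def chi (n : ℕ) (S : Finset (Fin n)) (x : Fin n → Bool) : ℝ :=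
  ∏ i ∈ S, (if x i then (-1 : ℝ) else 1)

/-- Fourier--Walsh coefficient `f̂(S) = E[f · χ_S]`. -/
noncomputable def fhat (n : ℕ) (f : (Fin n → Bool) → ℝ) (S : Finset (Fin n)) : ℝ :=
  Ev n (fun x => f x * chi n S x)

/-- Heat semigroup `P_t f = ∑_S e^{-t|S|} f̂(S) χ_S`. -/
noncomputable def heat (n : ℕ) (t : ℝ) (f : (Fin n → Bool) → ℝ) :
    (Fin n → Bool) → ℝ :=
  fun x => ∑ S : Finset (Fin n), Real.exp (-(t * S.card)) * fhat n f S * chi n S x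

/-- Influence of coordinate `i` on a Boolean (`{0,1}`-valued) function:
`Inf_i[f] = P[f(x) ≠ f(x ⊕ e_i)]`. -/
noncomputable def InfB (n : ℕ) (i : Fin n) (f : (Fin n → Bool) → ℝ) : ℝ :=
  Ev n (fun x => if f x = f (Function.update x i (! x i)) then 0 else 1)

/-- `L¹`-influence `Inf_i^{(1)}[f] = E[|∂_i f|]`. -/
noncomputable def Inf1 (n : ℕ) (i : Fin n) (f : (Fin n → Bool) → ℝ) : ℝ :=
  Ev n (fun x => |pD n i f x|)

/-- `L²`-influence `Inf_i[f] = E[|∂_i f|²]` for real-valued `f`. -/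
noncomputable def Inf2 (n : ℕ) (i : Fin n) (f : (Fin n → Bool) → ℝ) : ℝ :=
  Ev n (fun x => |pD n i f x| ^ 2)

/-- Difference operator `D_i f (x) = f(x) - f(x ⊕ e_i)`. -/
noncomputable def Dop (n : ℕ) (i : Fin n) (f : (Fin n → Bool) → ℝ) :
    (Fin n → Bool) → ℝ :=
  fun x => f x - f (Function.update x i (! x i))

/-- `‖f‖_p = (E[|f|^p])^{1/p}` (also used as a quasi-norm for `0 < p < 1`). -/
noncomputable def nrm (n : ℕ) (p : ℝ) (f : (Fin n → Bool) → ℝ) : ℝ :=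
  (Ev n (fun x => |f x| ^ p)) ^ (1 / p)

/-- Iterated discrete derivative along a list of coordinates. -/
noncomputable def pDList (n : ℕ) : List (Fin n) → ((Fin n → Bool) → ℝ) → ((Fin n → Bool) → ℝ)
  | [], f => f
  | i :: l, f => pD n i (pDList n l f)

/-- `∂_T f = ∂_{i₁} ∘ ⋯ ∘ ∂_{i_d} f` for `T = {i₁ < ⋯ < i_d}` (the order is immaterial
since discrete derivatives along distinct coordinates commute). -/
noncomputable def pDT (n : ℕ) (T : Finset (Fin n)) (f : (Fin n → Bool) → ℝ) :
    (Fin n → Bool) → ℝ :=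
  pDList n (T.sort (· ≤ ·)) f

/-!
Everything is diagonal in the Walsh basis. Since `χ_S(x ⊕ e_i) = -χ_S(x)` for `i ∈ S` and
`χ_S(x)` otherwise, `D_i` multiplies `f̂(S)` by `2·[i ∈ S]`; hence by Parseval
`E[D_{ij} f · P_t D_{ij} g] = 16 ∑_{S ⊇ {i,j}} e^{-t|S|} f̂(S) ĝ(S)`. For `k = |S| ≥ 2`,
`∫_0^∞ (e^t - 1) e^{-tk} dt = 1/(k-1) - 1/k = 1/(k(k-1))`, and `S` contains `k(k-1)/2` pairs
`i < j`, so the coefficient of `f̂(S) ĝ(S)` on the right is `(1/8) · 16 · (k(k-1)/2) / (k(k-1)) = 1`.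
-/

section Walsh

variable {n : ℕ}

lemma Ev_sum {α : Type*} (A : Finset α) (h : α → (Fin n → Bool) → ℝ) :
    Ev n (fun x => ∑ a ∈ A, h a x) = ∑ a ∈ A, Ev n (h a) := by
  rw [Ev, sum_comm, sum_div]; rfl

lemma Ev_const_mul (c : ℝ) (f : (Fin n → Bool) → ℝ) :
    Ev n (fun x => c * f x) = c * Ev n f := by
  simp only [Ev, ← mul_sum, mul_div_assoc]

lemma Ev_sub (f g : (Fin n → Bool) → ℝ) :
    Ev n (fun x => f x - g x) = Ev n f - Ev n g := by
  simp only [Ev, sum_sub_distrib, sub_div]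

lemma Ev_comp_perm (σ : Equiv.Perm (Fin n → Bool)) (f : (Fin n → Bool) → ℝ) :
    Ev n (fun x => f (σ x)) = Ev n f := by
  rw [Ev, Equiv.sum_comp σ f]; rfl

lemma involutive_update_not (i : Fin n) :
    Function.Involutive fun x : Fin n → Bool => Function.update x i (!x i) := by
  intro x
  ext j
  by_cases h : j = i
  · subst h; simp
  · simp [Function.update_of_ne h]

lemma chi_update_not (S : Finset (Fin n)) (i : Fin n) (x : Fin n → Bool) :
    chi n S (Function.update x i (!x i)) = (if i ∈ S then -1 else 1) * chi n S x := by
  rw [chi, chi, ← prod_ite_eq' S i (fun _ => (-1 : ℝ)), ← prod_mul_distrib]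
  refine prod_congr rfl fun j _ => ?_
  by_cases h : j = i
  · subst h; cases x j <;> simp
  · simp [h]

lemma fhat_Dop (i : Fin n) (f : (Fin n → Bool) → ℝ) (S : Finset (Fin n)) :
    fhat n (Dop n i f) S = if i ∈ S then 2 * fhat n f S else 0 := by
  have hflip : Ev n (fun x => f (Function.update x i (!x i)) * chi n S x)
      = (if i ∈ S then -1 else 1) * fhat n f S := by
    rw [← Ev_comp_perm (involutive_update_not i).toPerm, fhat, ← Ev_const_mul]
    congr 1
    ext x
    simp only [Function.Involutive.coe_toPerm, involutive_update_not i x, chi_update_not]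
    ring
  have hsplit : fhat n (Dop n i f) S
      = fhat n f S - Ev n (fun x => f (Function.update x i (!x i)) * chi n S x) := by
    simp only [fhat, Dop, sub_mul]
    exact Ev_sub _ _
  rw [hsplit, hflip]
  split_ifs <;> ring

lemma fhat_Dop_Dop (i j : Fin n) (f : (Fin n → Bool) → ℝ) (S : Finset (Fin n)) :
    fhat n (Dop n i (Dop n j f)) S = if i ∈ S ∧ j ∈ S then 4 * fhat n f S else 0 := by
  simp only [fhat_Dop]
  split_ifs <;> simp_all; ring

lemma Ev_mul_heat (t : ℝ) (F G : (Fin n → Bool) → ℝ) :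
    Ev n (fun x => F x * heat n t G x)
      = ∑ S : Finset (Fin n), Real.exp (-(t * S.card)) * (fhat n F S * fhat n G S) := by
  simp only [heat, mul_sum]
  rw [Ev_sum]
  refine sum_congr rfl fun S _ => ?_
  calc Ev n (fun x => F x * (Real.exp (-(t * S.card)) * fhat n G S * chi n S x))
      = Ev n (fun x => Real.exp (-(t * S.card)) * fhat n G S * (F x * chi n S x)) :=
        congrArg (Ev n) (funext fun x => by ring)
    _ = _ := by rw [Ev_const_mul]; simp only [fhat]; ring

lemma Ev_Dop_Dop_mul_heat (i j : Fin n) (t : ℝ) (f g : (Fin n → Bool) → ℝ) :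
    Ev n (fun x => Dop n i (Dop n j f) x * heat n t (Dop n i (Dop n j g)) x)
      = ∑ S ∈ univ.filter (fun S : Finset (Fin n) => i ∈ S ∧ j ∈ S),
          16 * (fhat n f S * fhat n g S) * Real.exp (-(t * S.card)) := by
  rw [Ev_mul_heat, sum_filter]
  refine sum_congr rfl fun S _ => ?_
  simp only [fhat_Dop_Dop]
  split_ifs <;> ring

end Walsh

section Kernel

open Real

lemma exp_sub_one_mul_exp_neg_mul (t k : ℝ) :
    (exp t - 1) * exp (-(t * k)) = exp ((1 - k) * t) - exp (-k * t) := by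
  rw [sub_mul, one_mul, ← exp_add]
  ring_nf

lemma integrableOn_exp_sub_one_mul_exp_neg_mul {k : ℝ} (hk : 1 < k) :
    IntegrableOn (fun t => (exp t - 1) * exp (-(t * k))) (Set.Ioi 0) := by
  simp only [exp_sub_one_mul_exp_neg_mul]
  exact (integrableOn_exp_mul_Ioi (by linarith) 0).sub (integrableOn_exp_mul_Ioi (by linarith) 0)

lemma integral_exp_sub_one_mul_exp_neg_mul {k : ℝ} (hk : 1 < k) :
    ∫ t in Set.Ioi 0, (exp t - 1) * exp (-(t * k)) = 1 / (k * (k - 1)) := by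
  simp only [exp_sub_one_mul_exp_neg_mul]
  rw [integral_sub (integrableOn_exp_mul_Ioi (by linarith) 0)
      (integrableOn_exp_mul_Ioi (by linarith) 0),
    integral_exp_mul_Ioi (by linarith), integral_exp_mul_Ioi (by linarith)]
  have : k - 1 ≠ 0 := by linarith
  have : 1 - k ≠ 0 := by linarith
  simp only [mul_zero, exp_zero]
  field_simp
  ring

end Kernel

lemma integral_Ev_Dop_Dop_mul_heat {n : ℕ} {i j : Fin n} (hij : i ≠ j)
    (f g : (Fin n → Bool) → ℝ) :
    ∫ t in Set.Ioi (0 : ℝ), (Real.exp t - 1) *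
        Ev n (fun x => Dop n i (Dop n j f) x * heat n t (Dop n i (Dop n j g)) x)
      = ∑ S ∈ univ.filter (fun S : Finset (Fin n) => i ∈ S ∧ j ∈ S),
          16 * (fhat n f S * fhat n g S) / (S.card * (S.card - 1)) := by
  have hcard : ∀ S ∈ univ.filter (fun S : Finset (Fin n) => i ∈ S ∧ j ∈ S),
      (1 : ℝ) < S.card := fun S hS => by
    obtain ⟨hi, hj⟩ := (mem_filter.1 hS).2
    exact_mod_cast one_lt_card.2 ⟨i, hi, j, hj, hij⟩
  simp only [Ev_Dop_Dop_mul_heat, mul_sum, mul_left_comm (Real.exp _ - 1)]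
  rw [integral_finsetSum _ fun S hS =>
    (integrableOn_exp_sub_one_mul_exp_neg_mul (hcard S hS)).const_mul _]
  refine sum_congr rfl fun S hS => ?_
  rw [integral_const_mul, integral_exp_sub_one_mul_exp_neg_mul (hcard S hS), mul_one_div]

lemma sum_pairs_lt_sum_supersets {α M : Type*} [Fintype α] [LinearOrder α] [AddCommMonoid M]
    (a : Finset α → M) :
    ∑ i, ∑ j ∈ univ.filter (fun j => i < j), ∑ S ∈ univ.filter (fun S : Finset α => i ∈ S ∧ j ∈ S), a S
      = ∑ S, S.card.choose 2 • a S := by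
  calc _ = ∑ p : α × α, ∑ S, if p ∈ S ×ˢ S then (if p.1 < p.2 then a S else 0) else 0 := by
          simp only [sum_filter]
          rw [← Fintype.sum_prod_type']
          refine sum_congr rfl fun p _ => ?_
          split_ifs <;> simp
    _ = ∑ S, ∑ p : α × α, if p ∈ S ×ˢ S then (if p.1 < p.2 then a S else 0) else 0 := sum_comm
    _ = _ := by
          refine sum_congr rfl fun S _ => ?_
          rw [← card_product_filter_lt, ← sum_const, sum_filter, sum_ite_mem, univ_inter]

/-- Heat-semigroup representation of the level-`≥ 2` Fourier weight
via the difference operators `D_{ij}`, with kernel `e^t − 1`. -/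
theorem heat_semigroup_representation_D (n : ℕ) (f g : (Fin n → Bool) → ℝ) :
    ∑ S ∈ Finset.univ.filter (fun S : Finset (Fin n) => 2 ≤ S.card),
        fhat n f S * fhat n g S
    = (1 / 8) * ∑ i : Fin n, ∑ j ∈ Finset.univ.filter (fun j : Fin n => i < j),
        ∫ t in Set.Ioi (0 : ℝ), (Real.exp t - 1) *
          Ev n (fun x => Dop n i (Dop n j f) x * heat n t (Dop n i (Dop n j g)) x) := by
  rw [sum_congr rfl fun i _ => sum_congr rfl fun j hj =>
      integral_Ev_Dop_Dop_mul_heat (mem_filter.1 hj).2.ne f g,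
    sum_pairs_lt_sum_supersets, mul_sum, sum_filter]
  refine sum_congr rfl fun S _ => ?_
  rw [nsmul_eq_mul, Nat.cast_choose_two]
  split_ifs with hS
  · have hk : (2 : ℝ) ≤ S.card := by exact_mod_cast hS
    have : (S.card : ℝ) - 1 ≠ 0 := by linarith
    field_simp
    ring
  · obtain h | h : S.card = 0 ∨ S.card = 1 := by omega
    all_goals simp [h]
end

section
/- Let f, g : {0,1}^n → ℝ. Then |∑_{S ⊆ [n], |S| ≥ 2} f̂(S)·ĝ(S)| ≤ (9/8)·∑_{1 ≤ i < j ≤ n} (‖∂_{ij} f‖_2 · ‖∂_{ij} g‖_2) / (1 + log( (‖∂_{ij} f‖_2 · ‖∂_{ij} g‖_2) / (‖∂_{ij} f‖_1 · ‖∂_{ij} g‖_1) )), where terms with ∂_{ij} f ≡ 0 or ∂_{ij} g ≡ 0 are interpreted as zero. -/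
/-
Since `(∂ᵢ∂ⱼ f)^(T) = 4 f̂(T ∪ {i, j})` for `i, j ∉ T`, and a set `S` with `|S| ≥ 2` contains
`(|S| choose 2)` pairs `i < j`, the left-hand side equals
`(1/8) ∑_{i<j} ∑_T ĥ(T) k̂(T) / ((|T|+1)(|T|+2))` with `h = ∂ᵢ∂ⱼ f` and `k = ∂ᵢ∂ⱼ g`.
As `1/((m+1)(m+2)) = ∫₀¹ (1-u) u^m du`, the inner sum is `∫₀¹ (1-u) ⟨h, T_u k⟩ du`.
Hypercontractivity (the two-point inequality `((a+b)/2)² + u ((a-b)/2)² ≤ ‖(a, b)‖²_{1+u}`,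
tensorised) gives `|⟨h, T_u k⟩| ≤ ‖h‖_{1+u} ‖k‖_{1+u}`, and Hölder interpolation between `L¹` and
`L²` bounds this by `A (B/A)^((1-u)/(1+u))`, where `A = ‖h‖₂ ‖k‖₂` and `B = ‖h‖₁ ‖k‖₁`.
Integrating against `1 - u` yields at most `3 A / (1 + log (A/B))`.
-/

open Finset MeasureTheory

open Real
open scoped BigOperators

/-! ### Elementary real inequalities -/

lemma one_le_avg_rpow_of_nonpos {q s : ℝ} (hq : q ≤ 0) (hs0 : 0 ≤ s) (hs1 : s < 1) :
    1 ≤ ((1 + s) ^ q + (1 - s) ^ q) / 2 := by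
  have hprod : 1 ≤ (1 + s) ^ q * (1 - s) ^ q := by
    rw [← mul_rpow (by linarith) (by linarith)]
    exact one_le_rpow_of_pos_of_le_one_of_nonpos (by nlinarith) (by nlinarith) hq
  have := rpow_nonneg (by linarith : 0 ≤ 1 + s) q
  have := rpow_nonneg (by linarith : 0 ≤ 1 - s) q
  nlinarith [sq_nonneg ((1 + s) ^ q - (1 - s) ^ q)]

lemma hasDerivAt_one_add_rpow {q s : ℝ} (hs : -1 < s) :
    HasDerivAt (fun s => (1 + s) ^ q) (q * (1 + s) ^ (q - 1)) s := by
  simpa using ((hasDerivAt_id s).const_add 1).rpow_const (p := q) (Or.inl (by simp; linarith))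

lemma hasDerivAt_one_sub_rpow {q s : ℝ} (hs : s < 1) :
    HasDerivAt (fun s => (1 - s) ^ q) (-(q * (1 - s) ^ (q - 1))) s := by
  simpa using ((hasDerivAt_id s).const_sub 1).rpow_const (p := q) (Or.inl (by simp; linarith))

lemma one_add_mul_sq_le_avg_rpow {p t : ℝ} (hp1 : 1 ≤ p) (hp2 : p ≤ 2) (ht0 : 0 ≤ t)
    (ht1 : t ≤ 1) : 1 + p * (p - 1) * t ^ 2 / 2 ≤ ((1 + t) ^ p + (1 - t) ^ p) / 2 := by
  have hp0 : 0 ≤ p := by linarith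
  have hp1' : 0 ≤ p - 1 := by linarith
  have hF' : MonotoneOn (fun s => p * ((1 + s) ^ (p - 1) - (1 - s) ^ (p - 1)) / 2 - p * (p - 1) * s)
      (Set.Icc 0 1) := by
    refine monotoneOn_of_hasDerivWithinAt_nonneg (convex_Icc 0 1)
      (f' := fun s => p * (p - 1) * (((1 + s) ^ (p - 1 - 1) + (1 - s) ^ (p - 1 - 1)) / 2 - 1))
      (by fun_prop (disch := assumption)) ?_ ?_ <;> rw [interior_Icc]
    · intro s hs
      exact (((((hasDerivAt_one_add_rpow (by linarith [hs.1])).sub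
        (hasDerivAt_one_sub_rpow hs.2)).const_mul p).div_const 2).sub
        ((hasDerivAt_id s).const_mul (p * (p - 1)))).hasDerivWithinAt.congr_deriv (by ring)
    · intro s hs
      have := one_le_avg_rpow_of_nonpos (q := p - 1 - 1) (by linarith) hs.1.le hs.2
      have : 0 ≤ p * (p - 1) := mul_nonneg hp0 hp1'
      nlinarith
  have hF : MonotoneOn
      (fun s => ((1 + s) ^ p + (1 - s) ^ p) / 2 - p * (p - 1) / 2 * s ^ 2) (Set.Icc 0 1) := by
    refine monotoneOn_of_hasDerivWithinAt_nonneg (convex_Icc 0 1)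
      (f' := fun s => p * ((1 + s) ^ (p - 1) - (1 - s) ^ (p - 1)) / 2 - p * (p - 1) * s)
      (by fun_prop (disch := assumption)) ?_ ?_ <;> rw [interior_Icc]
    · intro s hs
      exact ((((hasDerivAt_one_add_rpow (by linarith [hs.1])).add
        (hasDerivAt_one_sub_rpow hs.2)).div_const 2).sub
        ((hasDerivAt_pow 2 s).const_mul (p * (p - 1) / 2))).hasDerivWithinAt.congr_deriv
        (by push_cast; ring)
    · intro s hs
      simpa using hF' (Set.left_mem_Icc.2 zero_le_one) (Set.Ioo_subset_Icc_self hs) hs.1.le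
  have := hF (Set.left_mem_Icc.2 zero_le_one) ⟨ht0, ht1⟩ ht0
  norm_num at this
  linarith

noncomputable def powMean (p a b : ℝ) : ℝ := ((a ^ p + b ^ p) / 2) ^ (1 / p)

lemma powMean_nonneg {p a b : ℝ} (ha : 0 ≤ a) (hb : 0 ≤ b) : 0 ≤ powMean p a b := by
  unfold powMean; positivity

lemma powMean_comm (p a b : ℝ) : powMean p a b = powMean p b a := by
  rw [powMean, powMean, add_comm]

lemma powMean_mul {p m a b : ℝ} (hp : p ≠ 0) (hm : 0 ≤ m) (ha : 0 ≤ a) (hb : 0 ≤ b) :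
    powMean p (m * a) (m * b) = m * powMean p a b := by
  rw [powMean, powMean, mul_rpow hm ha, mul_rpow hm hb, ← mul_add, mul_div_assoc,
    mul_rpow (by positivity) (by positivity), ← rpow_mul hm, mul_one_div_cancel hp, rpow_one]

lemma one_add_mul_sq_le_powMean_sq {u t : ℝ} (hu0 : 0 ≤ u) (hu1 : u ≤ 1) (ht0 : 0 ≤ t)
    (ht1 : t ≤ 1) : 1 + u * t ^ 2 ≤ powMean (1 + u) (1 + t) (1 - t) ^ 2 := by
  have hmean : (1 + u * t ^ 2) ^ ((1 + u) / 2) ≤ ((1 + t) ^ (1 + u) + (1 - t) ^ (1 + u)) / 2 :=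
    calc (1 + u * t ^ 2) ^ ((1 + u) / 2) ≤ 1 + (1 + u) / 2 * (u * t ^ 2) :=
          rpow_one_add_le_one_add_mul_self (by nlinarith) (by linarith) (by linarith)
      _ = 1 + (1 + u) * (1 + u - 1) * t ^ 2 / 2 := by ring
      _ ≤ _ := one_add_mul_sq_le_avg_rpow (by linarith) (by linarith) ht0 ht1
  have hX : 0 ≤ ((1 + t) ^ (1 + u) + (1 - t) ^ (1 + u)) / 2 := by
    have := rpow_nonneg (by linarith : 0 ≤ 1 + t) (1 + u)
    have := rpow_nonneg (by linarith : 0 ≤ 1 - t) (1 + u)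
    positivity
  calc 1 + u * t ^ 2 = ((1 + u * t ^ 2) ^ ((1 + u) / 2)) ^ (2 / (1 + u)) := by
        rw [← rpow_mul (by positivity), show (1 + u) / 2 * (2 / (1 + u)) = 1 by field_simp,
          rpow_one]
    _ ≤ (((1 + t) ^ (1 + u) + (1 - t) ^ (1 + u)) / 2) ^ (2 / (1 + u)) :=
        rpow_le_rpow (by positivity) hmean (by positivity)
    _ = powMean (1 + u) (1 + t) (1 - t) ^ 2 := by
        rw [powMean, ← rpow_natCast, ← rpow_mul hX]; congr 1; push_cast; ring

lemma sq_add_mul_sq_le_powMean_sq {u a b : ℝ} (hu0 : 0 ≤ u) (hu1 : u ≤ 1) (ha : 0 ≤ a)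
    (hb : 0 ≤ b) : ((a + b) / 2) ^ 2 + u * ((a - b) / 2) ^ 2 ≤ powMean (1 + u) a b ^ 2 := by
  wlog hba : b ≤ a generalizing a b
  · rw [powMean_comm]
    convert this hb ha (by linarith) using 1
    ring
  rcases (add_nonneg ha hb).eq_or_lt with hab0 | hab0
  · obtain ⟨rfl, rfl⟩ : a = 0 ∧ b = 0 := ⟨by linarith, by linarith⟩
    norm_num
    positivity
  set m := (a + b) / 2
  have hm : 0 < m := by positivity
  set t := (a - b) / (a + b)
  have ht0 : 0 ≤ t := div_nonneg (by linarith) (by linarith)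
  have ht1 : t ≤ 1 := (div_le_one (by linarith)).2 (by linarith)
  have hab : a = m * (1 + t) ∧ b = m * (1 - t) := by
    constructor <;> simp only [m, t] <;> field_simp <;> ring
  calc ((a + b) / 2) ^ 2 + u * ((a - b) / 2) ^ 2 = m ^ 2 * (1 + u * t ^ 2) := by
        rw [hab.1, hab.2]; ring
    _ ≤ m ^ 2 * powMean (1 + u) (1 + t) (1 - t) ^ 2 :=
        mul_le_mul_of_nonneg_left (one_add_mul_sq_le_powMean_sq hu0 hu1 ht0 ht1) (by positivity)
    _ = powMean (1 + u) a b ^ 2 := by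
        rw [hab.1, hab.2, powMean_mul (by linarith) hm.le (by linarith) (by linarith)]; ring

lemma one_sub_mul_exp_neg_le {ℓ u : ℝ} (hℓ : 0 ≤ ℓ) (hu0 : 0 ≤ u) (hu1 : u ≤ 1) :
    (1 - u) * exp (-(ℓ * ((1 - u) / (1 + u)))) ≤ 3 / (1 + ℓ) := by
  set s := ℓ * (1 - u) / 2
  have hs : 0 ≤ s := by positivity
  have hexp : exp (-(ℓ * ((1 - u) / (1 + u)))) ≤ exp (-s) := by
    gcongr
    rw [show s = ℓ * ((1 - u) / 2) by ring]
    exact mul_le_mul_of_nonneg_left (div_le_div_of_nonneg_left (by linarith) (by linarith)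
      (by linarith)) hℓ
  have h1 : exp (-s) ≤ 1 := exp_le_one_iff.2 (by linarith)
  have h2 : s * exp (-s) ≤ 1 :=
    (mul_exp_neg_le_exp_neg_one s).trans (exp_le_one_iff.2 (by norm_num))
  rw [le_div_iff₀ (by linarith)]
  calc (1 - u) * exp (-(ℓ * ((1 - u) / (1 + u)))) * (1 + ℓ) ≤ (1 - u) * exp (-s) * (1 + ℓ) := by
        gcongr
    _ = (1 - u) * exp (-s) + 2 * (s * exp (-s)) := by ring
    _ ≤ 1 * 1 + 2 * 1 := by gcongr; linarith
    _ = 3 := by norm_num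

lemma rpow_mul_rpow_eq_rpow_exp {A B u : ℝ} (hA : 0 < A) (hB : 0 < B) (hu : 0 < 1 + u) :
    B ^ (1 - u) * A ^ (2 * u) = (A * exp (-(log (A / B) * ((1 - u) / (1 + u))))) ^ (1 + u) := by
  obtain ⟨a, rfl⟩ : ∃ a, A = exp a := ⟨log A, (exp_log hA).symm⟩
  obtain ⟨b, rfl⟩ : ∃ b, B = exp b := ⟨log B, (exp_log hB).symm⟩
  simp only [← exp_sub, log_exp, ← exp_add, ← exp_mul]
  congr 1
  field_simp
  ring

lemma integral_one_sub_mul_pow (m : ℕ) :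
    ∫ u in (0 : ℝ)..1, (1 - u) * u ^ m = 1 / ((m + 1) * (m + 2)) := by
  simp only [sub_mul, one_mul, ← pow_succ']
  rw [intervalIntegral.integral_sub (by apply Continuous.intervalIntegrable; fun_prop)
    (by apply Continuous.intervalIntegrable; fun_prop), integral_pow, integral_pow]
  field_simp
  push_cast
  ring

lemma sum_div_eq_integral {ι : Type*} (s : Finset ι) (d : ι → ℕ) (c : ι → ℝ) :
    ∑ i ∈ s, c i / ((d i + 1) * (d i + 2)) =
      ∫ u in (0 : ℝ)..1, (1 - u) * ∑ i ∈ s, u ^ d i * c i := by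
  simp_rw [mul_sum]
  rw [intervalIntegral.integral_finsetSum fun i _ => by
    apply Continuous.intervalIntegrable; fun_prop]
  refine sum_congr rfl fun i _ => ?_
  simp_rw [← mul_assoc, intervalIntegral.integral_mul_const, integral_one_sub_mul_pow]
  ring

/-! ### `Lᵖ` norms on the cube -/

lemma Ev_nonneg {n : ℕ} {f : (Fin n → Bool) → ℝ} (hf : ∀ x, 0 ≤ f x) : 0 ≤ Ev n f :=
  div_nonneg (sum_nonneg fun x _ => hf x) (by positivity)

lemma nrm_nonneg (n : ℕ) (p : ℝ) (f : (Fin n → Bool) → ℝ) : 0 ≤ nrm n p f :=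
  rpow_nonneg (Ev_nonneg fun _ => by positivity) _

lemma nrm_rpow {n : ℕ} {p : ℝ} (hp : p ≠ 0) (f : (Fin n → Bool) → ℝ) :
    nrm n p f ^ p = Ev n (fun x => |f x| ^ p) := by
  rw [nrm, one_div, rpow_inv_rpow (Ev_nonneg fun _ => by positivity) hp]

lemma Ev_eq_expect {n : ℕ} (f : (Fin n → Bool) → ℝ) : Ev n f = 𝔼 x, f x := by
  rw [Ev, expect_eq_sum_div_card, card_univ, Fintype.card_fun, Fintype.card_bool, Fintype.card_fin]
  push_cast; rfl

lemma sum_pi_fin_succ {M : Type*} [AddCommMonoid M] {n : ℕ} (F : (Fin (n + 1) → Bool) → M) :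
    ∑ x, F x = ∑ b, ∑ x : Fin n → Bool, F (Fin.cons b x) := by
  rw [← (Fin.consEquiv fun _ => Bool).sum_comp, Fintype.sum_prod_type]
  rfl

lemma Ev_succ {n : ℕ} (f : (Fin (n + 1) → Bool) → ℝ) :
    Ev (n + 1) f =
      (Ev n (fun x => f (Fin.cons false x)) + Ev n (fun x => f (Fin.cons true x))) / 2 := by
  simp only [Ev, sum_pi_fin_succ, Fintype.sum_bool, pow_succ]
  ring

lemma nrm_succ {n : ℕ} {p : ℝ} (hp : p ≠ 0) (f : (Fin (n + 1) → Bool) → ℝ) :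
    nrm (n + 1) p f = powMean p (nrm n p (fun x => f (Fin.cons false x)))
      (nrm n p (fun x => f (Fin.cons true x))) := by
  rw [powMean, nrm_rpow hp, nrm_rpow hp, nrm, Ev_succ]

lemma nrm_one {n : ℕ} (h : (Fin n → Bool) → ℝ) : nrm n 1 h = Ev n (fun x => |h x|) := by
  simp [nrm]

lemma nrm_zero (n : ℕ) {p : ℝ} (hp : p ≠ 0) : nrm n p 0 = 0 := by
  simp [nrm, Ev, zero_rpow hp, zero_rpow (inv_ne_zero hp)]

lemma nrm_one_pos {n : ℕ} {h : (Fin n → Bool) → ℝ} (hh : h ≠ 0) : 0 < nrm n 1 h := by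
  obtain ⟨x, hx⟩ := Function.ne_iff.1 hh
  rw [nrm_one, Ev]
  exact div_pos (sum_pos' (fun _ _ => abs_nonneg _) ⟨x, mem_univ x, abs_pos.2 hx⟩) (by positivity)

lemma nrm_one_le_nrm_two {n : ℕ} (h : (Fin n → Bool) → ℝ) : nrm n 1 h ≤ nrm n 2 h := by
  have hCS := expect_mul_sq_le_sq_mul_sq univ (fun x => |h x|) (fun _ => (1 : ℝ))
  simp only [mul_one, one_pow, expect_const univ_nonempty, sq_abs] at hCS
  rw [nrm_one, nrm]
  simp only [Ev_eq_expect, rpow_two, sq_abs, ← sqrt_eq_rpow]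
  exact le_sqrt_of_sq_le hCS

lemma nrm_one_add_rpow_le {n : ℕ} {u : ℝ} (hu0 : 0 < u) (hu1 : u ≤ 1) (h : (Fin n → Bool) → ℝ) :
    nrm n (1 + u) h ^ (1 + u) ≤ nrm n 1 h ^ (1 - u) * nrm n 2 h ^ (2 * u) := by
  have hu : 1 + u ≠ 0 := by linarith
  have hHolder := compact_inner_le_weight_mul_Lp_of_nonneg univ (one_le_inv₀ hu0 |>.2 hu1)
    (w := fun x => |h x|) (f := fun x => |h x| ^ u) (fun _ => abs_nonneg _) (fun _ => by positivity)
  have e1 (x) : |h x| * |h x| ^ u = |h x| ^ (1 + u) := by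
    rw [rpow_add' (abs_nonneg _) hu, rpow_one]
  have e2 (x) : |h x| * (|h x| ^ u) ^ u⁻¹ = |h x| ^ (2 : ℝ) := by
    rw [rpow_rpow_inv (abs_nonneg _) hu0.ne', ← sq, rpow_two]
  simp only [e1, e2, inv_inv] at hHolder
  rwa [nrm_rpow hu, nrm_one, rpow_mul (nrm_nonneg _ _ _), nrm_rpow two_ne_zero,
    Ev_eq_expect, Ev_eq_expect, Ev_eq_expect]

/-! ### Hypercontractivity of the noise form -/

def noiseWeight (u : ℝ) (a b : Bool) : ℝ := if a = b then 1 + u else 1 - u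

/-- `⟨f, T_u g⟩`: the expectation of `f x * g y` over `x` uniform and `y` obtained from `x` by
keeping each coordinate with probability `(1 + u) / 2`. -/
noncomputable def noiseForm (n : ℕ) (u : ℝ) (f g : (Fin n → Bool) → ℝ) : ℝ :=
  (∑ x, ∑ y, (∏ i, noiseWeight u (x i) (y i)) * (f x * g y)) / 4 ^ n

lemma noiseWeight_nonneg {u : ℝ} (hu0 : 0 ≤ u) (hu1 : u ≤ 1) (a b : Bool) :
    0 ≤ noiseWeight u a b := by
  unfold noiseWeight; split <;> linarith

lemma noiseWeight_eq (u : ℝ) (a b : Bool) :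
    noiseWeight u a b = 1 + u * ((if a then -1 else 1) * (if b then -1 else 1)) := by
  cases a <;> cases b <;> norm_num [noiseWeight] <;> ring

lemma prod_noiseWeight {n : ℕ} (u : ℝ) (x y : Fin n → Bool) :
    ∏ i, noiseWeight u (x i) (y i) = ∑ S, u ^ S.card * (chi n S x * chi n S y) := by
  simp only [noiseWeight_eq, prod_one_add, chi, prod_mul_distrib, prod_const]
  rw [Finset.powerset_univ]

lemma noiseForm_eq_sum_fhat (n : ℕ) (u : ℝ) (f g : (Fin n → Bool) → ℝ) :
    noiseForm n u f g = ∑ S, u ^ S.card * (fhat n f S * fhat n g S) := by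
  have hsum : ∑ x, ∑ y, (∏ i, noiseWeight u (x i) (y i)) * (f x * g y) =
      ∑ S, u ^ S.card * ((∑ x, f x * chi n S x) * ∑ y, g y * chi n S y) := by
    simp_rw [prod_noiseWeight, sum_mul]
    rw [sum_congr rfl fun x _ => sum_comm, sum_comm]
    simp_rw [mul_sum]
    exact sum_congr rfl fun S _ => sum_congr rfl fun x _ => sum_congr rfl fun y _ => by ring
  have h4 : (4 : ℝ) ^ n = 2 ^ n * 2 ^ n := by rw [← mul_pow]; norm_num
  rw [noiseForm, hsum, h4, sum_div]
  simp only [fhat, Ev]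
  exact sum_congr rfl fun S _ => by field_simp

lemma noiseForm_succ {n : ℕ} (u : ℝ) (f g : (Fin (n + 1) → Bool) → ℝ) :
    noiseForm (n + 1) u f g = (∑ b, ∑ b', noiseWeight u b b' *
      noiseForm n u (fun x => f (Fin.cons b x)) (fun y => g (Fin.cons b' y))) / 4 := by
  simp only [noiseForm, sum_pi_fin_succ, Fin.prod_univ_succ, Fin.cons_zero, Fin.cons_succ,
    mul_div_assoc', Finset.mul_sum, div_div, ← pow_succ, Finset.sum_div]
  refine sum_congr rfl fun b _ => ?_
  rw [Finset.sum_comm]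
  simp only [mul_assoc]

lemma sum_noiseWeight_mul_le {u : ℝ} (hu0 : 0 ≤ u) (hu1 : u ≤ 1) {a b : Bool → ℝ}
    (ha : ∀ i, 0 ≤ a i) (hb : ∀ i, 0 ≤ b i) :
    (∑ x, ∑ y, noiseWeight u x y * (a x * b y)) / 4 ≤
      powMean (1 + u) (a false) (a true) * powMean (1 + u) (b false) (b true) := by
  set ma := (a false + a true) / 2
  set da := (a false - a true) / 2
  set mb := (b false + b true) / 2
  set db := (b false - b true) / 2
  have hsum : (∑ x, ∑ y, noiseWeight u x y * (a x * b y)) / 4 = ma * mb + u * (da * db) := by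
    simp only [Fintype.sum_bool, noiseWeight, ma, da, mb, db]
    norm_num
    ring
  have hA := sq_add_mul_sq_le_powMean_sq hu0 hu1 (ha false) (ha true)
  have hB := sq_add_mul_sq_le_powMean_sq hu0 hu1 (hb false) (hb true)
  -- Cauchy–Schwarz for the form `(x, y) ↦ x₁ y₁ + u x₂ y₂`
  have hCS : (ma * mb + u * (da * db)) ^ 2 ≤ (ma ^ 2 + u * da ^ 2) * (mb ^ 2 + u * db ^ 2) := by
    nlinarith [mul_nonneg hu0 (sq_nonneg (ma * db - mb * da))]
  rw [hsum]
  refine (le_abs_self _).trans (abs_le_of_sq_le_sq ?_ ?_)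
  · calc _ ≤ (ma ^ 2 + u * da ^ 2) * (mb ^ 2 + u * db ^ 2) := hCS
      _ ≤ _ := by rw [mul_pow]; exact mul_le_mul hA hB (by positivity) (sq_nonneg _)
  · exact mul_nonneg (powMean_nonneg (ha _) (ha _)) (powMean_nonneg (hb _) (hb _))

theorem abs_noiseForm_le {u : ℝ} (hu0 : 0 ≤ u) (hu1 : u ≤ 1) (n : ℕ) (f g : (Fin n → Bool) → ℝ) :
    |noiseForm n u f g| ≤ nrm n (1 + u) f * nrm n (1 + u) g := by
  have hp : 1 + u ≠ 0 := by linarith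
  induction n with
  | zero =>
    simp [noiseForm, nrm, Ev, abs_mul, rpow_rpow_inv (abs_nonneg _) hp]
  | succ n ih =>
    rw [noiseForm_succ, nrm_succ hp, nrm_succ hp]
    refine le_trans ?_ (sum_noiseWeight_mul_le hu0 hu1
      (a := fun b => nrm n (1 + u) (fun x => f (Fin.cons b x)))
      (b := fun b => nrm n (1 + u) (fun x => g (Fin.cons b x)))
      (fun _ => nrm_nonneg _ _ _) (fun _ => nrm_nonneg _ _ _))
    rw [abs_div, abs_of_pos (four_pos : (0 : ℝ) < 4)]
    gcongr
    refine (abs_sum_le_sum_abs _ _).trans (sum_le_sum fun b _ =>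
      (abs_sum_le_sum_abs _ _).trans (sum_le_sum fun b' _ => ?_))
    rw [abs_mul, abs_of_nonneg (noiseWeight_nonneg hu0 hu1 b b')]
    exact mul_le_mul_of_nonneg_left (ih _ _) (noiseWeight_nonneg hu0 hu1 b b')

lemma abs_noiseForm_rpow_le {n : ℕ} {u : ℝ} (hu0 : 0 < u) (hu1 : u ≤ 1) (h k : (Fin n → Bool) → ℝ) :
    |noiseForm n u h k| ^ (1 + u) ≤
      (nrm n 1 h * nrm n 1 k) ^ (1 - u) * (nrm n 2 h * nrm n 2 k) ^ (2 * u) := by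
  have hnn := nrm_nonneg n
  calc |noiseForm n u h k| ^ (1 + u) ≤ (nrm n (1 + u) h * nrm n (1 + u) k) ^ (1 + u) :=
        rpow_le_rpow (abs_nonneg _) (abs_noiseForm_le hu0.le hu1 n h k) (by linarith)
    _ = nrm n (1 + u) h ^ (1 + u) * nrm n (1 + u) k ^ (1 + u) := mul_rpow (hnn _ _) (hnn _ _)
    _ ≤ (nrm n 1 h ^ (1 - u) * nrm n 2 h ^ (2 * u)) * (nrm n 1 k ^ (1 - u) * nrm n 2 k ^ (2 * u)) :=
        mul_le_mul (nrm_one_add_rpow_le hu0 hu1 h) (nrm_one_add_rpow_le hu0 hu1 k)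
          (rpow_nonneg (hnn _ _) _) (mul_nonneg (rpow_nonneg (hnn _ _) _) (rpow_nonneg (hnn _ _) _))
    _ = _ := by rw [mul_rpow (hnn _ _) (hnn _ _), mul_rpow (hnn _ _) (hnn _ _)]; ring

noncomputable def talagrandTerm (n : ℕ) (h k : (Fin n → Bool) → ℝ) : ℝ :=
  nrm n 2 h * nrm n 2 k / (1 + log (nrm n 2 h * nrm n 2 k / (nrm n 1 h * nrm n 1 k)))

lemma talagrandTerm_nonneg {n : ℕ} (h k : (Fin n → Bool) → ℝ) : 0 ≤ talagrandTerm n h k := by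
  have hBA : nrm n 1 h * nrm n 1 k ≤ nrm n 2 h * nrm n 2 k :=
    mul_le_mul (nrm_one_le_nrm_two h) (nrm_one_le_nrm_two k) (nrm_nonneg _ _ _) (nrm_nonneg _ _ _)
  refine div_nonneg (mul_nonneg (nrm_nonneg _ _ _) (nrm_nonneg _ _ _)) ?_
  rcases (mul_nonneg (nrm_nonneg n 1 h) (nrm_nonneg n 1 k)).eq_or_lt with hB | hB
  · simp [← hB]
  · linarith [log_nonneg ((one_le_div hB).2 hBA)]

lemma one_sub_mul_abs_noiseForm_le {n : ℕ} {h k : (Fin n → Bool) → ℝ} (hh : h ≠ 0) (hk : k ≠ 0)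
    {u : ℝ} (hu0 : 0 < u) (hu1 : u ≤ 1) :
    (1 - u) * |noiseForm n u h k| ≤ 3 * talagrandTerm n h k := by
  set A := nrm n 2 h * nrm n 2 k
  set B := nrm n 1 h * nrm n 1 k
  have hB : 0 < B := mul_pos (nrm_one_pos hh) (nrm_one_pos hk)
  have hBA : B ≤ A := mul_le_mul (nrm_one_le_nrm_two h) (nrm_one_le_nrm_two k)
    (nrm_nonneg _ _ _) (nrm_nonneg _ _ _)
  have hA : 0 < A := hB.trans_le hBA
  have hnoise : |noiseForm n u h k| ≤ A * exp (-(log (A / B) * ((1 - u) / (1 + u)))) := by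
    rw [← rpow_le_rpow_iff (abs_nonneg _) (by positivity) (by linarith : 0 < 1 + u),
      ← rpow_mul_rpow_eq_rpow_exp hA hB (by linarith)]
    exact abs_noiseForm_rpow_le hu0 hu1 h k
  calc (1 - u) * |noiseForm n u h k|
      ≤ (1 - u) * (A * exp (-(log (A / B) * ((1 - u) / (1 + u))))) := by
        gcongr
    _ = A * ((1 - u) * exp (-(log (A / B) * ((1 - u) / (1 + u))))) := by ring
    _ ≤ A * (3 / (1 + log (A / B))) := by
        gcongr
        exact one_sub_mul_exp_neg_le (log_nonneg ((one_le_div hB).2 hBA)) hu0.le hu1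
    _ = 3 * talagrandTerm n h k := by rw [talagrandTerm]; ring

theorem abs_sum_fhat_mul_div_le {n : ℕ} (h k : (Fin n → Bool) → ℝ) :
    |∑ T, fhat n h T * fhat n k T / ((T.card + 1) * (T.card + 2))| ≤ 3 * talagrandTerm n h k := by
  rcases eq_or_ne h 0 with rfl | hh
  · simp [fhat, Ev, talagrandTerm, nrm_zero]
  rcases eq_or_ne k 0 with rfl | hk
  · simp [fhat, Ev, talagrandTerm, nrm_zero]
  rw [sum_div_eq_integral univ card (fun T => fhat n h T * fhat n k T)]
  simp_rw [← noiseForm_eq_sum_fhat]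
  have hbound : ∀ u ∈ Set.uIoc (0 : ℝ) 1,
      ‖(1 - u) * noiseForm n u h k‖ ≤ 3 * talagrandTerm n h k := by
    intro u hu
    rw [Set.uIoc_of_le zero_le_one] at hu
    rw [norm_mul, norm_of_nonneg (by linarith [hu.2]), norm_eq_abs]
    exact one_sub_mul_abs_noiseForm_le hh hk hu.1 hu.2
  simpa using intervalIntegral.norm_integral_le_of_norm_le_const hbound

/-! ### Fourier coefficients of discrete derivatives -/

section Flip

variable {n : ℕ} (i : Fin n)

def flipAt (x : Fin n → Bool) : Fin n → Bool := Function.update x i (!x i)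

lemma flipAt_involutive : Function.Involutive (flipAt i) := by
  intro x; simp [flipAt]

lemma sum_comp_flipAt {M : Type*} [AddCommMonoid M] (F : (Fin n → Bool) → M) :
    ∑ x, F (flipAt i x) = ∑ x, F x :=
  Equiv.sum_comp (flipAt_involutive i).toPerm F

lemma chi_flipAt (T : Finset (Fin n)) (x : Fin n → Bool) :
    chi n T (flipAt i x) = (if i ∈ T then -1 else 1) * chi n T x := by
  unfold chi
  split_ifs with hi
  · rw [← mul_prod_erase T _ hi, ← mul_prod_erase T _ hi, ← mul_assoc]
    congr 1
    · cases h : x i <;> simp [flipAt, h]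
    · exact prod_congr rfl fun j hj => by simp [flipAt, Function.update_of_ne (ne_of_mem_erase hj)]
  · rw [one_mul]
    exact prod_congr rfl fun j hj => by
      simp [flipAt, Function.update_of_ne (fun h : j = i => hi (h ▸ hj))]

lemma pD_mul_chi (f : (Fin n → Bool) → ℝ) (T : Finset (Fin n)) (x : Fin n → Bool) :
    pD n i f x * chi n T x =
      -(f x * ((if x i then -1 else 1) * chi n T x)) - (if i ∈ T then -1 else 1) *
        (f (flipAt i x) * ((if flipAt i x i then -1 else 1) * chi n T (flipAt i x))) := by
  have hx : Function.update x i (x i) = x := Function.update_eq_self i x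
  rw [chi_flipAt]
  cases h : x i <;> simp only [h] at hx <;> simp [pD, flipAt, h, hx] <;> split_ifs <;> ring

lemma fhat_pD (f : (Fin n → Bool) → ℝ) (T : Finset (Fin n)) :
    fhat n (pD n i f) T = if i ∈ T then 0 else -2 * fhat n f (insert i T) := by
  set g : (Fin n → Bool) → ℝ := fun x => f x * ((if x i then -1 else 1) * chi n T x)
  have hsum : ∑ x, pD n i f x * chi n T x = -(1 + if i ∈ T then -1 else 1) * ∑ x, g x := by
    simp_rw [pD_mul_chi]
    rw [sum_sub_distrib, sum_neg_distrib, ← mul_sum, sum_comp_flipAt i g]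
    ring
  unfold fhat Ev
  rw [hsum]
  split_ifs with hi
  · simp
  · simp only [g, chi, prod_insert hi]
    ring

end Flip

lemma fhat_pD_pD {n : ℕ} {i j : Fin n} (hij : i ≠ j) (f : (Fin n → Bool) → ℝ)
    (T : Finset (Fin n)) :
    fhat n (pD n i (pD n j f)) T =
      if i ∈ T ∨ j ∈ T then 0 else 4 * fhat n f (insert i (insert j T)) := by
  rw [fhat_pD]
  by_cases hi : i ∈ T
  · simp [hi]
  · have hj' : j ∈ insert i T ↔ j ∈ T := by simp [hij.symm]
    rw [fhat_pD, Finset.insert_comm]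
    by_cases hj : j ∈ T
    · simp [hi, hj, hj']
    · simp [hi, hj, hj']
      ring

lemma sum_fhat_pD_pD_div {n : ℕ} {i j : Fin n} (hij : i ≠ j) (f g : (Fin n → Bool) → ℝ) :
    ∑ T, fhat n (pD n i (pD n j f)) T * fhat n (pD n i (pD n j g)) T / ((T.card + 1) * (T.card + 2))
      = 8 * ∑ S with i ∈ S ∧ j ∈ S, fhat n f S * fhat n g S / (S.card.choose 2) := by
  rw [mul_sum, ← sum_filter_of_ne (p := fun T => i ∉ T ∧ j ∉ T) fun T _ hT => ?_]
  · refine sum_nbij' (fun T => insert i (insert j T)) (fun S => (S.erase i).erase j)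
      ?_ ?_ ?_ ?_ fun T hT => ?_
    · intro T _; simp
    · intro S _; simp
    · intro T hT
      simp only [mem_filter, Finset.mem_univ, true_and] at hT
      rw [erase_insert (by simp [hij, hT.1]), erase_insert hT.2]
    · intro S hS
      simp only [mem_filter, Finset.mem_univ, true_and] at hS
      rw [insert_erase (mem_erase.2 ⟨hij.symm, hS.2⟩), insert_erase hS.1]
    · simp only [mem_filter, Finset.mem_univ, true_and] at hT
      have hcard : (insert i (insert j T)).card = T.card + 2 := by
        rw [card_insert_of_notMem (by simp [hij, hT.1]), card_insert_of_notMem hT.2]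
      rw [fhat_pD_pD hij, fhat_pD_pD hij, if_neg (by tauto), if_neg (by tauto), hcard,
        Nat.cast_choose_two]
      push_cast
      rw [show (T.card : ℝ) + 2 - 1 = T.card + 1 by ring]
      field_simp
      ring
  · by_contra hc
    apply hT
    rw [fhat_pD_pD hij, if_pos (by tauto), zero_mul, zero_div]

lemma sum_card_filter_lt {α : Type*} [LinearOrder α] (S : Finset α) :
    ∑ i ∈ S, #{j ∈ S | i < j} = (#S).choose 2 := by
  rw [← card_product_filter_lt, card_filter, sum_product]
  exact sum_congr rfl fun i _ => card_filter _ _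

lemma sum_pairs_sum_div_choose {α : Type*} [Fintype α] [LinearOrder α] (c : Finset α → ℝ) :
    ∑ i, ∑ j with i < j, ∑ S with i ∈ S ∧ j ∈ S, c S / (#S).choose 2 =
      ∑ S with 2 ≤ #S, c S := by
  have hswap : ∀ i, ∑ j with i < j, ∑ S with i ∈ S ∧ j ∈ S, c S / (#S).choose 2 =
      ∑ S with i ∈ S, ∑ j ∈ S with i < j, c S / (#S).choose 2 := fun i =>
    sum_comm' fun j S => by simp only [mem_filter, Finset.mem_univ, true_and]; tauto
  rw [sum_congr rfl fun i _ => hswap i, sum_comm' (t' := univ) (s' := fun S => S) fun i S => by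
    simp only [mem_filter, Finset.mem_univ, true_and, and_true]]
  rw [sum_filter]
  refine sum_congr rfl fun S _ => ?_
  simp only [sum_const, nsmul_eq_mul, ← sum_mul, ← Nat.cast_sum, sum_card_filter_lt]
  split_ifs with hS
  · have : ((#S).choose 2 : ℝ) ≠ 0 := by exact_mod_cast (Nat.choose_pos hS).ne'
    field_simp
  · rw [Nat.choose_eq_zero_of_lt (by omega)]; simp

lemma abs_sum_mem_pair_div_choose_le {n : ℕ} {i j : Fin n} (hij : i ≠ j)
    (f g : (Fin n → Bool) → ℝ) :
    |∑ S with i ∈ S ∧ j ∈ S, fhat n f S * fhat n g S / (S.card.choose 2)| ≤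
      3 / 8 * talagrandTerm n (pD n i (pD n j f)) (pD n i (pD n j g)) := by
  have hcore := abs_sum_fhat_mul_div_le (pD n i (pD n j f)) (pD n i (pD n j g))
  rw [sum_fhat_pD_pD_div hij, abs_mul, abs_of_pos (by norm_num : (0 : ℝ) < 8)] at hcore
  linarith

/-- Talagrand-type `L¹`-`L²` upper bound for the level-`≥ 2` Fourier
weight. (Terms with `∂_{ij} f ≡ 0` or `∂_{ij} g ≡ 0` vanish: their numerator is `0`.) -/
theorem talagrand_upper_bound_level2 (n : ℕ) (f g : (Fin n → Bool) → ℝ) :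
    |∑ S ∈ Finset.univ.filter (fun S : Finset (Fin n) => 2 ≤ S.card),
        fhat n f S * fhat n g S|
    ≤ (9 / 8) * ∑ i : Fin n, ∑ j ∈ Finset.univ.filter (fun j : Fin n => i < j),
        (nrm n 2 (pD n i (pD n j f)) * nrm n 2 (pD n i (pD n j g))) /
          (1 + Real.log
            ((nrm n 2 (pD n i (pD n j f)) * nrm n 2 (pD n i (pD n j g))) /
             (nrm n 1 (pD n i (pD n j f)) * nrm n 1 (pD n i (pD n j g))))) := by
  rw [← sum_pairs_sum_div_choose]
  calc _ ≤ ∑ i, ∑ j with i < j,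
          |∑ S with i ∈ S ∧ j ∈ S, fhat n f S * fhat n g S / (S.card.choose 2)| :=
        (abs_sum_le_sum_abs _ _).trans (sum_le_sum fun i _ => abs_sum_le_sum_abs _ _)
    _ ≤ ∑ i, ∑ j with i < j, 3 / 8 * talagrandTerm n (pD n i (pD n j f)) (pD n i (pD n j g)) := by
        gcongr with i _ j hj
        exact abs_sum_mem_pair_div_choose_le (mem_filter.1 hj).2.ne f g
    _ ≤ ∑ i, ∑ j with i < j, 9 / 8 * talagrandTerm n (pD n i (pD n j f)) (pD n i (pD n j g)) := by
        gcongr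
        · exact talagrandTerm_nonneg _ _
        · norm_num
    _ = _ := by simp only [mul_sum, talagrandTerm]
end
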